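/- arXiv:1603.05063 — 2 statements merged into one kernel-verified Lean document; each statement's English description precedes it below -/
import Mathlib

section
/- Let i_1,…,i_s ≥ 1 be integers lying in pairwise distinct q-cyclotomic cosets mod N = q^n − 1, and for each j let δ_j denote the size of the q-cyclotomic coset of i_j mod N (so δ_j divides n and F_{q^{δ_j}} is an intermediate field of F_{q^n}/F_q). For λ_1,…,λ_s ∈ F_{q^n}, the identity Tr_{F_{q^n}/F_q}(λ_1 x^{i_1} + ⋯ + λ_s x^{i_s}) = 0 holds for all x ∈ F_{q^n} if and only if Tr_{F_{q^n}/F_{q^{δ_j}}}(λ_j) = 0 for every j = 1,…,s. In particular, if δ_j = n for every j, then the identity holds for all x ∈ F_{q^n} if and only if λ_j = 0 for every j. -/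
open scoped BigOperators

namespace QCSub

/-- The cyclic shift `T(u_1,…,u_N) = (u_N, u_1, …, u_{N-1})` on words of length `N`. -/
def shift {F : Type*} {N : ℕ} (u : Fin N → F) : Fin N → F :=
  fun k => u ⟨((k : ℕ) + (N - 1)) % N, Nat.mod_lt _ k.pos⟩

/-- A code `C ⊆ F^N` is quasi-cyclic of index `ℓ` if `T^ℓ(C) = C` and `ℓ` is the
smallest positive integer with this property. -/
def IsQCOfIndex {F : Type*} {N : ℕ} (C : Set (Fin N → F)) (ℓ : ℕ) : Prop :=
  0 < ℓ ∧ shift^[ℓ] '' C = C ∧ ∀ m : ℕ, 0 < m → shift^[m] '' C = C → ℓ ≤ m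

/-- The `q`-cyclotomic coset of `i` mod `N`, i.e. `{i·q^k mod N : k ≥ 0}`. -/
def cycCoset (q N i : ℕ) : Set (ZMod N) :=
  {x | ∃ k : ℕ, x = (i : ZMod N) * (q : ZMod N) ^ k}

/-- The word `(Tr_{E/F}(β_1 α^{k i_1} + ⋯ + β_s α^{k i_s}))_{0 ≤ k ≤ N−1}`. -/
noncomputable def traceWord (F : Type*) {E : Type*} [Field F] [Field E] [Algebra F E]
    (N : ℕ) {s : ℕ} (α : E) (i : Fin s → ℕ) (β : Fin s → E) : Fin N → F :=
  fun k => Algebra.trace F E (∑ j, β j * α ^ ((k : ℕ) * i j))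

/-- The (sub)code `C_V` determined by coefficient sets `V_1,…,V_s ⊆ E`. -/
noncomputable def codeOf (F : Type*) {E : Type*} [Field F] [Field E] [Algebra F E]
    (N : ℕ) {s : ℕ} (α : E) (i : Fin s → ℕ) (V : Fin s → Set E) : Set (Fin N → F) :=
  {w | ∃ β : Fin s → E, (∀ j, β j ∈ V j) ∧ w = traceWord F N α i β}

/-- An `F`-subspace `V ⊆ E` "is a vector space over" the intermediate field `K`
if it is closed under multiplication by the elements of `K`. -/
def SpanOver {F E : Type*} [Field F] [Field E] [Algebra F E]
    (V : Submodule F E) (K : IntermediateField F E) : Prop :=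
  ∀ c ∈ K, ∀ v ∈ V, c * v ∈ V

/-- The Gaussian binomial coefficient `(m choose k)_Q`. -/
def gaussBinom (Q m k : ℕ) : ℕ :=
  (∏ t ∈ Finset.range k, (Q ^ m - Q ^ t)) / (∏ t ∈ Finset.range k, (Q ^ k - Q ^ t))

/-- `N(m, Q)`: the number of nonzero `F_Q`-subspaces of an `m`-dimensional
`F_Q`-vector space, i.e. the sum of Gaussian binomial coefficients
`Σ_{k=1}^{m} (m choose k)_Q`. -/
def numSubspaces (m Q : ℕ) : ℕ := ∑ k ∈ Finset.Icc 1 m, gaussBinom Q m k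

end QCSub

open QCSub

/-!
Since `i_j q^{δ_j} ≡ i_j` modulo `N = q^n - 1`, every power `x^{i_j}` is fixed by the
`q^{δ_j}`-Frobenius and therefore lies in `K_j`. The tower formula then gives
`Tr_{E/F}(λ_j x^{i_j}) = Tr_{K_j/F}(x^{i_j} Tr_{E/K_j}(λ_j))`, which settles one direction.
Conversely, writing `Tr_{K_j/F}` as the sum of the `q^r`-th powers for `r < δ_j` turns the
identity into the vanishing on `E^×` of a polynomial of degree `< N` with exponents
`i_j q^r mod N`. These exponents are pairwise distinct, because the cosets are distinct and the
coset of `i_j` has exactly `δ_j` elements, so every coefficient `Tr_{E/K_j}(λ_j)^{q^r}` vanishes.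
If `δ_j = n` then `K_j = E`, and the relative trace is the identity.
-/

open Function Polynomial Finset Module

theorem Function.ncard_range_iterate {α : Type*} {f : α → α} {x : α}
    (hx : x ∈ periodicPts f) : (Set.range fun k => f^[k] x).ncard = minimalPeriod f x := by
  have hpos := minimalPeriod_pos_of_mem_periodicPts hx
  have hrange : (Set.range fun k => f^[k] x) =
      (fun k => f^[k] x) '' Set.Iio (minimalPeriod f x) := by
    ext y
    constructor
    · rintro ⟨k, rfl⟩
      exact ⟨k % minimalPeriod f x, Nat.mod_lt _ hpos, iterate_mod_minimalPeriod_eq⟩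
    · rintro ⟨k, -, rfl⟩
      exact ⟨k, rfl⟩
  rw [hrange, iterate_injOn_Iio_minimalPeriod.ncard_image, Set.ncard_Iio_nat]

theorem range_mul_pow_mul_pow {M : Type*} [Monoid M] {u : M} {n : ℕ} (hn : 0 < n)
    (hu : u ^ n = 1) (a : M) (r : ℕ) :
    (Set.range fun k => a * u ^ r * u ^ k) = Set.range fun k => a * u ^ k := by
  ext y
  constructor
  · rintro ⟨k, rfl⟩
    exact ⟨r + k, by simp only [pow_add, mul_assoc]⟩
  · rintro ⟨k, rfl⟩
    refine ⟨r * (n - 1) + k, ?_⟩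
    simp only [mul_assoc, ← pow_add]
    rw [← add_assoc, ← mul_one_add, show 1 + (n - 1) = n by omega, pow_add, pow_mul', hu, one_pow,
      one_mul]

namespace QCSub

variable {q N n : ℕ}

theorem cycCoset_eq_range (q N i : ℕ) :
    cycCoset q N i = Set.range fun k => (i : ZMod N) * (q : ZMod N) ^ k := by
  ext x
  simp [cycCoset, eq_comm]

theorem ncard_cycCoset (hn : 0 < n) (hqN : (q : ZMod N) ^ n = 1) (i : ℕ) :
    (cycCoset q N i).ncard = minimalPeriod (· * (q : ZMod N)) i := by
  simp_rw [cycCoset_eq_range, ← mul_right_iterate_apply]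
  exact ncard_range_iterate (mk_mem_periodicPts hn (by simp [IsPeriodicPt, IsFixedPt, hqN]))

theorem natCast_mul_pow_ncard_cycCoset (hn : 0 < n) (hqN : (q : ZMod N) ^ n = 1) (i : ℕ) :
    (i : ZMod N) * (q : ZMod N) ^ (cycCoset q N i).ncard = i := by
  rw [ncard_cycCoset hn hqN]
  have := isPeriodicPt_minimalPeriod (· * (q : ZMod N)) (i : ZMod N)
  rwa [IsPeriodicPt, IsFixedPt, mul_right_iterate_apply] at this

theorem injOn_natCast_mul_pow (hn : 0 < n) (hqN : (q : ZMod N) ^ n = 1) (i : ℕ) :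
    Set.InjOn (fun r => (i : ZMod N) * (q : ZMod N) ^ r) (Set.Iio (cycCoset q N i).ncard) := by
  rw [ncard_cycCoset hn hqN]
  simpa using iterate_injOn_Iio_minimalPeriod (f := (· * (q : ZMod N))) (x := (i : ZMod N))

theorem cycCoset_eq_of_natCast_mul_pow_eq (hn : 0 < n) (hqN : (q : ZMod N) ^ n = 1)
    {i i' r r' : ℕ} (h : (i : ZMod N) * (q : ZMod N) ^ r = i' * (q : ZMod N) ^ r') :
    cycCoset q N i = cycCoset q N i' := by
  rw [cycCoset_eq_range, cycCoset_eq_range, ← range_mul_pow_mul_pow hn hqN _ r, h,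
    range_mul_pow_mul_pow hn hqN]

theorem injOn_mul_pow_mod (hn : 0 < n) (hqN : (q : ZMod N) ^ n = 1) {ι : Type*} [Fintype ι]
    (i : ι → ℕ) (hdist : ∀ j j', j ≠ j' → cycCoset q N (i j) ≠ cycCoset q N (i j')) :
    Set.InjOn (fun a : Σ _ : ι, ℕ => i a.1 * q ^ a.2 % N)
      (univ.sigma fun j => range (cycCoset q N (i j)).ncard) := by
  rintro ⟨j, r⟩ hr ⟨j', r'⟩ hr' h
  simp only [coe_sigma, Set.mem_sigma_iff, coe_range] at hr hr'
  have hz : (i j : ZMod N) * (q : ZMod N) ^ r = i j' * (q : ZMod N) ^ r' := by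
    exact_mod_cast (ZMod.natCast_eq_natCast_iff' _ _ _).mpr h
  obtain rfl : j = j' := by
    by_contra hne
    exact hdist j j' hne (cycCoset_eq_of_natCast_mul_pow_eq hn hqN hz)
  obtain rfl := injOn_natCast_mul_pow hn hqN (i j) hr.2 hr'.2 hz
  rfl

end QCSub

theorem ZMod.natCast_pow_eq_one_mod_pow_sub_one {q : ℕ} (hq : q ≠ 0) (n : ℕ) :
    (q : ZMod (q ^ n - 1)) ^ n = 1 := by
  have h := ZMod.natCast_self (q ^ n - 1)
  rwa [Nat.cast_sub (Nat.one_le_pow n q (Nat.pos_of_ne_zero hq)), Nat.cast_pow, Nat.cast_one,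
    sub_eq_zero] at h

theorem Module.finrank_eq_of_natCard_eq_pow {K V : Type*} [DivisionRing K] [AddCommGroup V]
    [Module K V] [Module.Finite K V] [Finite K] {d : ℕ} (h : Nat.card V = Nat.card K ^ d) :
    finrank K V = d :=
  Nat.pow_right_injective Finite.one_lt_card (natCard_eq_pow_finrank.symm.trans h)

section FiniteField

variable {F E : Type*} [Field F] [Field E] [Algebra F E]

theorem FiniteField.pow_pow_eq_of_natCast_mul_eq [Finite E] {i Q : ℕ} (hQ : Q ≠ 0)
    (h : ((i * Q : ℕ) : ZMod (Nat.card E - 1)) = i) (x : E) : (x ^ i) ^ Q = x ^ i := by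
  have := Fintype.ofFinite E
  rw [← pow_mul]
  by_cases hx : x = 0
  · subst hx
    rcases Nat.eq_zero_or_pos i with rfl | hi
    · simp
    · simp [zero_pow hi.ne', hQ, hi.ne']
  · have hx1 : x ^ (Nat.card E - 1) = 1 := by
      rw [Nat.card_eq_fintype_card]; exact FiniteField.pow_card_sub_one_eq_one x hx
    rw [pow_eq_pow_mod _ hx1, pow_eq_pow_mod i hx1, (ZMod.natCast_eq_natCast_iff' _ _ _).mp h]

theorem FiniteField.eq_zero_of_sum_mul_pow_eq_zero [Finite E] {ι : Type*} {s : Finset ι}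
    {c : ι → E} {e : ι → ℕ} (he : Set.InjOn e s) (hlt : ∀ a ∈ s, e a < Nat.card E - 1)
    (h : ∀ x : E, x ≠ 0 → ∑ a ∈ s, c a * x ^ e a = 0) {a : ι} (ha : a ∈ s) : c a = 0 := by
  classical
  have := Fintype.ofFinite E
  set P : E[X] := ∑ b ∈ s, C (c b) * X ^ e b
  have hPdeg : P.natDegree ≤ Nat.card E - 2 :=
    natDegree_sum_le_of_forall_le _ _ fun b hb =>
      (natDegree_C_mul_X_pow_le _ _).trans (by have := hlt b hb; omega)
  have hP0 : P = 0 := by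
    refine eq_zero_of_natDegree_lt_card_of_eval_eq_zero' P (univ.erase 0) (fun x hx => ?_) ?_
    · simpa [P, eval_finsetSum] using h x (ne_of_mem_erase hx)
    · have := Finite.one_lt_card (α := E)
      rw [card_erase_of_mem (mem_univ _), card_univ, ← Nat.card_eq_fintype_card]
      omega
  have hcoeff : P.coeff (e a) = c a := by
    simp only [P, finsetSum_coeff, coeff_C_mul_X_pow]
    rw [sum_eq_single a (fun b hb hba => if_neg fun hab => hba (he hb ha hab.symm))
      (fun h => absurd ha h), if_pos rfl]
  rw [← hcoeff, hP0, coeff_zero]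

theorem IntermediateField.mem_of_pow_card_eq [Finite E] (K : IntermediateField F E) {y : E}
    (hy : y ^ Nat.card K = y) : y ∈ K := by
  have : Fintype K := Fintype.ofFinite K
  have hfix : IsFixedPt (FiniteField.frobeniusAlgEquivOfAlgebraic K E) y := by
    rw [IsFixedPt, FiniteField.coe_frobeniusAlgEquivOfAlgebraic, ← Nat.card_eq_fintype_card]
    exact hy
  obtain ⟨c, rfl⟩ := (IsGalois.mem_range_algebraMap_iff_fixed (F := K) y).mpr fun f => by
    obtain ⟨k, rfl⟩ := (FiniteField.bijective_frobeniusAlgEquivOfAlgebraic_pow K E).2 f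
    rw [AlgEquiv.coe_pow]
    exact hfix.iterate k
  exact c.2

theorem IntermediateField.trace_mul_of_mem [FiniteDimensional F E] (K : IntermediateField F E)
    {y : E} (hy : y ∈ K) (a : E) :
    Algebra.trace F E (a * y) = Algebra.trace F K (⟨y, hy⟩ * Algebra.trace K E a) := by
  rw [← Algebra.trace_trace (S := K), show a * y = (⟨y, hy⟩ : K) • a from mul_comm a y, map_smul,
    smul_eq_mul]

theorem IntermediateField.algebraMap_trace_mul_eq_sum_pow [Finite E] (K : IntermediateField F E)
    {y : E} (hy : y ∈ K) (a : E) :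
    algebraMap F E (Algebra.trace F E (a * y)) =
      ∑ r ∈ range (finrank F K), ((Algebra.trace K E a : E) * y) ^ Nat.card F ^ r := by
  rw [K.trace_mul_of_mem hy, IsScalarTower.algebraMap_apply F K E,
    FiniteField.algebraMap_trace_eq_sum_pow, map_sum]
  simp [mul_comm]

theorem IntermediateField.trace_eq_zero_iff_of_card_eq [Finite E] (K : IntermediateField F E)
    (h : Nat.card K = Nat.card E) (a : E) : Algebra.trace K E a = 0 ↔ a = 0 := by
  have hrank : finrank K E = 1 :=
    (Nat.pow_eq_self_iff Finite.one_lt_card).mp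
      (h ▸ natCard_eq_pow_finrank (K := K) (V := E)).symm
  have := FiniteField.algebraMap_trace_eq_sum_pow K E a
  rw [hrank, sum_range_one, pow_zero, pow_one] at this
  rw [← map_eq_zero_iff (algebraMap K E) (algebraMap K E).injective, this]

theorem trace_sum_mul_pow_eq_zero_iff [Finite E] {ι : Type*} [Fintype ι]
    (K : ι → IntermediateField F E) (lam : ι → E) (i : ι → ℕ)
    (hmem : ∀ j (x : E), x ^ i j ∈ K j)
    (hinj : Set.InjOn (fun a : Σ _ : ι, ℕ => i a.1 * Nat.card F ^ a.2 % (Nat.card E - 1))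
      (univ.sigma fun j => range (finrank F (K j)))) :
    (∀ x : E, Algebra.trace F E (∑ j, lam j * x ^ i j) = 0) ↔
      ∀ j, Algebra.trace (K j) E (lam j) = 0 := by
  have := Fintype.ofFinite E
  constructor
  · intro H j
    have hsum : ∀ x : E, x ≠ 0 → ∑ a ∈ univ.sigma fun j => range (finrank F (K j)),
        (Algebra.trace (K a.1) E (lam a.1) : E) ^ Nat.card F ^ a.2 *
          x ^ (i a.1 * Nat.card F ^ a.2 % (Nat.card E - 1)) = 0 := by
      intro x hx
      have hx1 : x ^ (Nat.card E - 1) = 1 := by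
        rw [Nat.card_eq_fintype_card]; exact FiniteField.pow_card_sub_one_eq_one x hx
      calc _ = algebraMap F E (Algebra.trace F E (∑ j, lam j * x ^ i j)) := by
            rw [sum_sigma, map_sum, map_sum]
            refine sum_congr rfl fun j _ => ?_
            rw [(K j).algebraMap_trace_mul_eq_sum_pow (hmem j x)]
            refine sum_congr rfl fun r _ => ?_
            rw [mul_pow, ← pow_mul, ← pow_eq_pow_mod _ hx1]
        _ = 0 := by rw [H x, map_zero]
    have h0 := FiniteField.eq_zero_of_sum_mul_pow_eq_zero hinj
      (fun _ _ => Nat.mod_lt _ (Nat.sub_pos_of_lt Finite.one_lt_card)) hsum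
      (a := ⟨j, 0⟩) (mem_sigma.mpr ⟨mem_univ j, mem_range.mpr finrank_pos⟩)
    simpa using h0
  · intro H x
    simp [IntermediateField.trace_mul_of_mem _ (hmem _ x), H]

end FiniteField

theorem trace_identity_vanishes_iff_general
    (p e q n N : ℕ) [Fact p.Prime] (hq : q = p ^ e) (hn : 0 < n)
    (hN : N = q ^ n - 1)
    (F E : Type*) [Field F] [Field E] [Algebra F E]
    (hF : Nat.card F = q) (hE : Nat.card E = q ^ n)
    (s : ℕ) (i : Fin s → ℕ)
    (hdist : ∀ j j' : Fin s, j ≠ j' → cycCoset q N (i j) ≠ cycCoset q N (i j'))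
    (δ : Fin s → ℕ) (hδ : ∀ j, (cycCoset q N (i j)).ncard = δ j)
    (K : Fin s → IntermediateField F E) (hK : ∀ j, Nat.card (K j) = q ^ δ j)
    (lam : Fin s → E) :
    ((∀ x : E, Algebra.trace F E (∑ j, lam j * x ^ i j) = 0) ↔
      ∀ j, Algebra.trace (K j) E (lam j) = 0) ∧
    ((∀ j, δ j = n) →
      ((∀ x : E, Algebra.trace F E (∑ j, lam j * x ^ i j) = 0) ↔ ∀ j, lam j = 0)) := by
  have hq0 : q ≠ 0 := hq ▸ pow_ne_zero e (Fact.out : p.Prime).ne_zero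
  have : Finite E := Nat.finite_of_card_ne_zero (hE ▸ pow_ne_zero n hq0)
  have : Finite F := Nat.finite_of_card_ne_zero (hF ▸ hq0)
  have hqN : (q : ZMod N) ^ n = 1 := hN ▸ ZMod.natCast_pow_eq_one_mod_pow_sub_one hq0 n
  have hcardN : Nat.card E - 1 = N := by rw [hE, hN]
  have hrank (j : Fin s) : finrank F (K j) = δ j :=
    finrank_eq_of_natCard_eq_pow (by rw [hK j, hF])
  have hmem (j : Fin s) (x : E) : x ^ i j ∈ K j := by
    refine (K j).mem_of_pow_card_eq ?_
    rw [hK j, ← hδ j]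
    refine FiniteField.pow_pow_eq_of_natCast_mul_eq (pow_ne_zero _ hq0) ?_ x
    rw [hcardN]
    push_cast
    exact natCast_mul_pow_ncard_cycCoset hn hqN (i j)
  have hinj : Set.InjOn (fun a : Σ _ : Fin s, ℕ => i a.1 * Nat.card F ^ a.2 % (Nat.card E - 1))
      (univ.sigma fun j => range (finrank F (K j))) := by
    simpa only [hrank, hδ, hF, hcardN] using injOn_mul_pow_mod hn hqN i hdist
  have key := trace_sum_mul_pow_eq_zero_iff K lam i hmem hinj
  refine ⟨key, fun hall => key.trans (forall_congr' fun j => ?_)⟩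
  exact (K j).trace_eq_zero_iff_of_card_eq (by rw [hK j, hall j, hE]) (lam j)

/-- Theorem 2.5 of Güneri, cited as Theorem `cg`.
For `i_1,…,i_s ≥ 1` in pairwise distinct `q`-cyclotomic cosets mod `N = q^n − 1`,
with `δ_j` the size of the coset of `i_j`, the identity
`Tr_{F_{q^n}/F_q}(λ_1 x^{i_1} + ⋯ + λ_s x^{i_s}) = 0` for all `x` holds iff
`Tr_{F_{q^n}/F_{q^{δ_j}}}(λ_j) = 0` for all `j`; in particular if every `δ_j = n`,
it holds iff every `λ_j = 0`. -/
theorem trace_identity_vanishes_iff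
    (p e q n N : ℕ) [Fact p.Prime] (he : 0 < e) (hq : q = p ^ e) (hn : 0 < n)
    (hN : N = q ^ n - 1)
    (F E : Type*) [Field F] [Field E] [Algebra F E]
    (hF : Nat.card F = q) (hE : Nat.card E = q ^ n)
    (s : ℕ) (i : Fin s → ℕ) (hi : ∀ j, 1 ≤ i j)
    (hdist : ∀ j j' : Fin s, j ≠ j' → cycCoset q N (i j) ≠ cycCoset q N (i j'))
    (δ : Fin s → ℕ) (hδ : ∀ j, (cycCoset q N (i j)).ncard = δ j)
    (hδn : ∀ j, δ j ∣ n)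
    (K : Fin s → IntermediateField F E) (hK : ∀ j, Nat.card (K j) = q ^ δ j)
    (lam : Fin s → E) :
    ((∀ x : E, Algebra.trace F E (∑ j, lam j * x ^ i j) = 0) ↔
      ∀ j, Algebra.trace (K j) E (lam j) = 0) ∧
    ((∀ j, δ j = n) →
      ((∀ x : E, Algebra.trace F E (∑ j, lam j * x ^ i j) = 0) ↔ ∀ j, lam j = 0)) :=
  trace_identity_vanishes_iff_general p e q n N hq hn hN F E hF hE s i hdist δ hδ K hK lam
end

section
/- Fix j ∈ {1,…,s}, let V_j ⊆ F_{q^n} be an F_q-linear subspace, and let C'_j = {(Tr_{F_{q^n}/F_q}(β_j α^{k i_j}))_{0 ≤ k ≤ N−1} : β_j ∈ V_j}. Then C'_j is a quasi-cyclic code of index ℓ_j if and only if V_j is a vector space over the subfield F_q(α^{ℓ_j i_j}) of F_{q^n} and ℓ_j is the minimal positive integer with this property. -/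
open scoped BigOperators

open QCSub

/-!
Put `x = α ^ i₀` and `d = [F(x) : F]`. Since `x ^ (q ^ d) = x`, we get `i₀ q ^ d ≡ i₀ (mod N)`,
so the cyclotomic coset of `i₀` has at most `d` elements; as it has `n`, `F(x) = E`. Hence the
powers of `x` span `E` and, the trace form being nondegenerate, `β ↦ (Tr(β x ^ k))_k` is
injective. The shift sends the word of `β` to the word of `x⁻¹ β`, so `T^m(C) = C` iff
`x⁻ᵐ V = V`, which for the finite set `V` means `x ^ m V ⊆ V`, i.e. that `V` is closed under
multiplication by `F(x ^ m)`.
-/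

open IntermediateField
open scoped Pointwise

theorem Set.Finite.inv_smul_set_eq_iff_smul_set_subset₀ {G₀ α : Type*} [GroupWithZero G₀]
    [MulAction G₀ α] {s : Set α} (hs : s.Finite) {c : G₀} (hc : c ≠ 0) :
    c⁻¹ • s = s ↔ c • s ⊆ s := by
  refine ⟨fun h => ((congrArg (c • ·) h).symm.trans (smul_inv_smul₀ hc s)).subset,
    fun h => ?_⟩
  have hcs : c • s = s :=
    Set.eq_of_subset_of_ncard_le h (Set.ncard_smul_set (Units.mk0 c hc) s).ge hs
  calc c⁻¹ • s = c⁻¹ • c • s := by rw [hcs]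
    _ = s := inv_smul_smul₀ hc s

theorem ncard_cycCoset_le {q N i d : ℕ} (hd : 0 < d)
    (hperiod : (i : ZMod N) * (q : ZMod N) ^ d = i) : (cycCoset q N i).ncard ≤ d := by
  have hpow : ∀ j, (i : ZMod N) * ((q : ZMod N) ^ d) ^ j = i := by
    intro j
    induction j with
    | zero => rw [pow_zero, mul_one]
    | succ j ih => rw [pow_succ, ← mul_assoc, ih, hperiod]
  have hsub : cycCoset q N i ⊆
      ((Finset.range d).image fun r => (i : ZMod N) * (q : ZMod N) ^ r : Set (ZMod N)) := by
    rintro _ ⟨k, rfl⟩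
    refine Finset.mem_coe.mpr
      (Finset.mem_image.mpr ⟨k % d, Finset.mem_range.mpr (Nat.mod_lt k hd), ?_⟩)
    conv_rhs => rw [← Nat.div_add_mod k d, pow_add, pow_mul, ← mul_assoc, hpow]
  calc (cycCoset q N i).ncard ≤ _ := Set.ncard_le_ncard hsub (Finset.finite_toSet _)
    _ ≤ d := by
      rw [Set.ncard_coe_finset]
      exact Finset.card_image_le.trans (Finset.card_range d).le

section FieldTheory

variable {F E : Type*} [Field F] [Field E] [Algebra F E]

theorem spanOver_adjoin_simple_iff (V : Submodule F E) {y : E} (hy : IsAlgebraic F y) :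
    SpanOver V F⟮y⟯ ↔ ∀ v ∈ V, y * v ∈ V := by
  refine ⟨fun h => h y (mem_adjoin_simple_self F y), fun h c hc => ?_⟩
  rw [← mem_toSubalgebra, adjoin_simple_toSubalgebra_of_isAlgebraic hy] at hc
  induction hc using Algebra.adjoin_induction with
  | mem z hz => rwa [Set.mem_singleton_iff.mp hz]
  | algebraMap r =>
    intro v hv
    rw [Algebra.algebraMap_eq_smul_one, smul_mul_assoc, one_mul]
    exact V.smul_mem r hv
  | add a b _ _ iha ihb => exact fun v hv => add_mul a b v ▸ V.add_mem (iha v hv) (ihb v hv)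
  | mul a b _ _ iha ihb => exact fun v hv => (mul_assoc a b v).symm ▸ iha _ (ihb v hv)

theorem span_powers_eq_top_of_adjoin_eq_top {x : E} (hx : IsAlgebraic F x) (htop : F⟮x⟯ = ⊤) :
    Submodule.span F (Set.range (x ^ · : ℕ → E)) = ⊤ := by
  rw [← Submonoid.coe_powers, Submonoid.powers_eq_closure, ← Algebra.adjoin_eq_span,
    Algebra.toSubmodule_eq_top, ← adjoin_simple_toSubalgebra_of_isAlgebraic hx, htop,
    top_toSubalgebra]

theorem eq_zero_of_forall_trace_mul_pow_eq_zero [FiniteDimensional F E] [Algebra.IsSeparable F E]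
    {x : E} (htop : F⟮x⟯ = ⊤) {β : E} (h : ∀ k : ℕ, Algebra.trace F E (β * x ^ k) = 0) :
    β = 0 := by
  refine (traceForm_nondegenerate F E).1 β fun y => ?_
  have hβ : Algebra.traceForm F E β = 0 :=
    LinearMap.ext_on (span_powers_eq_top_of_adjoin_eq_top
      (Algebra.IsAlgebraic.isAlgebraic x) htop) (by rintro _ ⟨k, rfl⟩; exact h k)
  exact LinearMap.congr_fun hβ y

theorem finrank_eq_of_natCard_eq_pow [Finite E] {n : ℕ} (hE : Nat.card E = Nat.card F ^ n) :
    Module.finrank F E = n := by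
  have : Finite F := Finite.of_injective _ (algebraMap F E).injective
  rw [Module.natCard_eq_pow_finrank (K := F)] at hE
  exact Nat.pow_right_injective Finite.one_lt_card hE

theorem adjoin_pow_eq_top_of_ncard_cycCoset [Finite E] {n i : ℕ} {α : E} (hα : IsOfFinOrder α)
    (hE : Nat.card E = Nat.card F ^ n)
    (hcoset : (cycCoset (Nat.card F) (orderOf α) i).ncard = n) : F⟮α ^ i⟯ = ⊤ := by
  set d := Module.finrank F F⟮α ^ i⟯
  have hfix : (α ^ i) ^ Nat.card F ^ d = α ^ i := by
    have := Fintype.ofFinite F⟮α ^ i⟯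
    have h := FiniteField.pow_card (AdjoinSimple.gen F (α ^ i))
    rw [Fintype.card_eq_nat_card, Module.natCard_eq_pow_finrank (K := F)] at h
    exact congrArg Subtype.val h
  have hperiod : (i : ZMod (orderOf α)) * (Nat.card F : ZMod (orderOf α)) ^ d = i := by
    have h := (ZMod.natCast_eq_natCast_iff _ _ _).mpr
      (hα.pow_eq_pow_iff_modEq.mp ((pow_mul α i _).trans hfix))
    push_cast at h
    exact h
  refine eq_of_le_of_finrank_le le_top ?_
  rw [finrank_top', finrank_eq_of_natCard_eq_pow hE, ← hcoset]
  exact ncard_cycCoset_le Module.finrank_pos hperiod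

end FieldTheory

section Code

variable {F E : Type*} [Field F] [Field E] [Algebra F E] {N s : ℕ} {α : E}

theorem shift_traceWord (hα : α ^ N = 1) (i : Fin s → ℕ) (β : Fin s → E) :
    shift (traceWord F N α i β) = traceWord F N α i (fun j => (α ^ i j)⁻¹ * β j) := by
  funext k
  have hα₀ : α ≠ 0 := (IsUnit.of_pow_eq_one hα k.pos.ne').ne_zero
  have hprev : α ^ (((k : ℕ) + (N - 1)) % N) = α ^ (k : ℕ) * α⁻¹ := by
    rw [← pow_eq_pow_mod _ hα, eq_mul_inv_iff_mul_eq₀ hα₀, ← pow_succ,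
      Nat.add_assoc, Nat.sub_add_cancel k.pos, pow_add, hα, mul_one]
  simp only [shift, traceWord, pow_mul, hprev, mul_pow, inv_pow]
  congr 1
  refine Finset.sum_congr rfl fun j _ => ?_
  ring

theorem iterate_shift_traceWord (hα : α ^ N = 1) (i : Fin s → ℕ) (m : ℕ)
    (β : Fin s → E) :
    shift^[m] (traceWord F N α i β) =
      traceWord F N α i (fun j => (α ^ (m * i j))⁻¹ * β j) := by
  induction m with
  | zero => simp
  | succ m ih =>
    rw [Function.iterate_succ_apply', ih, shift_traceWord hα]
    congr 1
    funext j
    ring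

theorem image_iterate_shift_codeOf (hα : α ^ N = 1) (i : Fin s → ℕ) (m : ℕ)
    (V : Fin s → Set E) :
    shift^[m] '' codeOf F N α i V = codeOf F N α i (fun j => (α ^ (m * i j))⁻¹ • V j) := by
  ext w
  simp only [codeOf, Set.mem_image, Set.mem_ofPred_eq, Set.mem_smul_set, smul_eq_mul]
  constructor
  · rintro ⟨_, ⟨β, hβ, rfl⟩, rfl⟩
    exact ⟨_, fun j => ⟨β j, hβ j, rfl⟩, iterate_shift_traceWord hα i m β⟩
  · rintro ⟨γ, hγ, rfl⟩
    choose β hβ hβγ using hγ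
    refine ⟨_, ⟨β, hβ, rfl⟩, ?_⟩
    rw [iterate_shift_traceWord hα]
    exact congrArg _ (funext hβγ)

end Code

section FinOne

variable {F E : Type*} [Field F] [Field E] [Algebra F E] {N i : ℕ} {α : E}

theorem traceWord_fin_one_injective [FiniteDimensional F E] [Algebra.IsSeparable F E]
    (hN : 0 < N) (hα : α ^ N = 1) (htop : F⟮α ^ i⟯ = ⊤) :
    Function.Injective (traceWord F N α (fun _ : Fin 1 => i)) := by
  intro β γ h
  have hx : (α ^ i) ^ N = 1 := by rw [← pow_mul, mul_comm, pow_mul, hα, one_pow]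
  have hβγ : β 0 - γ 0 = 0 := eq_zero_of_forall_trace_mul_pow_eq_zero htop fun k => by
    have hk := congrFun h ⟨k % N, Nat.mod_lt k hN⟩
    simp only [traceWord, Fin.sum_univ_one] at hk
    rw [sub_mul, map_sub, sub_eq_zero, pow_eq_pow_mod k hx, ← pow_mul, mul_comm i]
    exact hk
  funext j
  rw [Subsingleton.elim j 0]
  exact sub_eq_zero.mp hβγ

theorem subset_of_codeOf_fin_one_subset
    (hinj : Function.Injective (traceWord F N α (fun _ : Fin 1 => i))) {A B : Set E}
    (h : codeOf F N α (fun _ : Fin 1 => i) (fun _ => A) ⊆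
      codeOf F N α (fun _ : Fin 1 => i) (fun _ => B)) :
    A ⊆ B := by
  intro v hv
  obtain ⟨β, hβ, hw⟩ := h ⟨fun _ => v, fun _ => hv, rfl⟩
  exact congrFun (hinj hw) 0 ▸ hβ 0

theorem codeOf_fin_one_injective
    (hinj : Function.Injective (traceWord F N α (fun _ : Fin 1 => i))) :
    Function.Injective fun A : Set E => codeOf F N α (fun _ : Fin 1 => i) (fun _ => A) :=
  fun _ _ h => (subset_of_codeOf_fin_one_subset hinj h.le).antisymm
    (subset_of_codeOf_fin_one_subset hinj h.ge)

end FinOne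

theorem isQC_iff_spanOver_adjoin_general
    (p e q n N : ℕ) [Fact p.Prime] (hq : q = p ^ e)
    (hN : N = q ^ n - 1)
    (F E : Type*) [Field F] [Field E] [Algebra F E]
    (hF : Nat.card F = q) (hE : Nat.card E = q ^ n)
    (α : E) (hα : orderOf α = q ^ n - 1)
    (i₀ : ℕ) (hfull : (cycCoset q N i₀).ncard = n)
    (V : Submodule F E) (ℓ : ℕ) :
    IsQCOfIndex (codeOf F N α (fun _ : Fin 1 => i₀) (fun _ => (V : Set E))) ℓ ↔
      (0 < ℓ ∧ SpanOver V (IntermediateField.adjoin F {α ^ (ℓ * i₀)}) ∧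
        ∀ m : ℕ, 0 < m → SpanOver V (IntermediateField.adjoin F {α ^ (m * i₀)}) → ℓ ≤ m) := by
  have : Finite E := Nat.finite_of_card_ne_zero <| by
    rw [hE, hq]; exact pow_ne_zero _ (pow_ne_zero _ (Fact.out : p.Prime).ne_zero)
  subst hF
  have hNα : orderOf α = N := hα.trans hN.symm
  have hfin : IsOfFinOrder α := orderOf_pos_iff.mp <| by
    rw [hα, ← hE]; exact Nat.sub_pos_of_lt Finite.one_lt_card
  have hαN : α ^ N = 1 := hNα ▸ pow_orderOf_eq_one α
  have hinj := traceWord_fin_one_injective (hNα ▸ hfin.orderOf_pos) hαN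
    (adjoin_pow_eq_top_of_ncard_cycCoset hfin hE (hNα ▸ hfull))
  have key (m : ℕ) : shift^[m] '' codeOf F N α (fun _ : Fin 1 => i₀) (fun _ => (V : Set E)) =
      codeOf F N α (fun _ : Fin 1 => i₀) (fun _ => (V : Set E)) ↔
        SpanOver V F⟮α ^ (m * i₀)⟯ := by
    rw [image_iterate_shift_codeOf hαN, (codeOf_fin_one_injective hinj).eq_iff,
      (Set.toFinite _).inv_smul_set_eq_iff_smul_set_subset₀ (pow_ne_zero _ hfin.isUnit.ne_zero),
      spanOver_adjoin_simple_iff V (Algebra.IsAlgebraic.isAlgebraic _), Set.smul_set_subset_iff]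
    rfl
  simp only [IsQCOfIndex, key]

/-- Proposition on quasi-cyclicity of `C'_j`. For an `F_q`-subspace
`V ⊆ F_{q^n}`, the code `C'_j = {(Tr(β α^{k i_j}))_k : β ∈ V}` is quasi-cyclic of index
`ℓ_j` iff `V` is a vector space over `F_q(α^{ℓ_j i_j})` and `ℓ_j` is the minimal positive
integer with this property. -/
theorem isQC_iff_spanOver_adjoin
    (p e q n N : ℕ) [Fact p.Prime] (he : 0 < e) (hq : q = p ^ e) (hn : 0 < n)
    (hN : N = q ^ n - 1)
    (F E : Type*) [Field F] [Field E] [Algebra F E]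
    (hF : Nat.card F = q) (hE : Nat.card E = q ^ n)
    (α : E) (hα : orderOf α = q ^ n - 1)
    (i₀ : ℕ) (hi₀ : 1 ≤ i₀) (hfull : (cycCoset q N i₀).ncard = n)
    (V : Submodule F E) (ℓ : ℕ) :
    IsQCOfIndex (codeOf F N α (fun _ : Fin 1 => i₀) (fun _ => (V : Set E))) ℓ ↔
      (0 < ℓ ∧ SpanOver V (IntermediateField.adjoin F {α ^ (ℓ * i₀)}) ∧
        ∀ m : ℕ, 0 < m → SpanOver V (IntermediateField.adjoin F {α ^ (m * i₀)}) → ℓ ≤ m) :=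
  isQC_iff_spanOver_adjoin_general p e q n N hq hN F E hF hE α hα i₀ hfull V ℓ
end
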